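/- Let d + 2k ≥ 2 and μ(t) = (t, …, t^d, cos t, sin t, …, cos kt, sin kt) ∈ ℝ^{d+2k}. Then any d + 2k + 1 points μ(t₀), …, μ(t_{d+2k}) with distinct parameters 0 < t₀ < ⋯ < t_{d+2k} < 2π are affinely independent. -/

import Mathlib

open Real

noncomputable def mixedMoment (d k : ℕ) (t : ℝ) : EuclideanSpace ℝ (Fin (d + 2 * k)) :=
  WithLp.toLp 2 fun i =>
    if (i : ℕ) < d then t ^ ((i : ℕ) + 1)
    else if ((i : ℕ) - d) % 2 = 0 then Real.cos ((((i : ℕ) - d) / 2 + 1 : ℕ) * t)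
    else Real.sin ((((i : ℕ) - d) / 2 + 1 : ℕ) * t)

open Finset Matrix

-- pairing lemma
lemma sum_range_two_mul' {M : Type*} [AddCommMonoid M] (k : ℕ) (g : ℕ → M) :
    ∑ i ∈ range (2 * k), g i = ∑ j ∈ range k, (g (2 * j) + g (2 * j + 1)) := by
  induction k with
  | zero => simp
  | succ k ih =>
      have : 2 * (k + 1) = (2 * k) + 1 + 1 := by ring
      rw [this, sum_range_succ, sum_range_succ, ih, sum_range_succ, add_assoc]

-- sum over shifted range
lemma sum_range_add' {M : Type*} [AddCommMonoid M] (g : ℕ → M) (m n : ℕ) :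
    ∑ i ∈ range (m + n), g i = (∑ i ∈ range m, g i) + ∑ i ∈ range n, g (m + i) := by
  induction n with
  | zero => simp
  | succ n ih => rw [← add_assoc, sum_range_succ, sum_range_succ, ih, add_assoc]

noncomputable def polyTrig (d k : ℕ) (c a b : ℕ → ℝ) (t : ℝ) : ℝ :=
  (∑ i ∈ range (d + 1), c i * t ^ i) +
    ∑ j ∈ range k, (a j * Real.cos ((j + 1 : ℕ) * t) + b j * Real.sin ((j + 1 : ℕ) * t))

lemma polyTrig_hasDerivAt (d k : ℕ) (c a b : ℕ → ℝ) (x : ℝ) :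
    HasDerivAt (polyTrig (d + 1) k c a b)
      (polyTrig d k (fun i => (i + 1 : ℕ) * c (i + 1))
        (fun j => ((j + 1 : ℕ)) * b j) (fun j => -(((j + 1 : ℕ)) * a j)) x) x := by
  unfold polyTrig
  apply HasDerivAt.add
  · -- polynomial part
    have h1 : ∀ t : ℝ, ∑ i ∈ range (d + 1 + 1), c i * t ^ i
        = (∑ i ∈ range (d + 1), c (i + 1) * t ^ (i + 1)) + c 0 := by
      intro t
      rw [Finset.sum_range_succ']
      simp
    simp only [h1]
    have h2 : HasDerivAt (fun t : ℝ => ∑ i ∈ range (d + 1), c (i + 1) * t ^ (i + 1))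
        (∑ i ∈ range (d + 1), ((i + 1 : ℕ) * c (i + 1)) * x ^ i) x := by
      apply HasDerivAt.fun_sum
      intro i _
      have := (hasDerivAt_pow (i + 1) x).const_mul (c (i + 1))
      simpa [mul_comm, mul_assoc, mul_left_comm] using this
    simpa using h2.add_const (c 0)
  · -- trig part
    apply HasDerivAt.fun_sum
    intro j _
    have hc : HasDerivAt (fun t : ℝ => ((j : ℝ) + 1) * t) ((j : ℝ) + 1) x := by
      simpa using (hasDerivAt_id x).const_mul ((j : ℝ) + 1)
    have hcos : HasDerivAt (fun t : ℝ => Real.cos (((j : ℝ) + 1) * t))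
        (-Real.sin (((j : ℝ) + 1) * x) * ((j : ℝ) + 1)) x :=
      (Real.hasDerivAt_cos (((j : ℝ) + 1) * x)).comp x hc
    have hsin : HasDerivAt (fun t : ℝ => Real.sin (((j : ℝ) + 1) * t))
        (Real.cos (((j : ℝ) + 1) * x) * ((j : ℝ) + 1)) x :=
      (Real.hasDerivAt_sin (((j : ℝ) + 1) * x)).comp x hc
    have := (hcos.const_mul (a j)).fun_add (hsin.const_mul (b j))
    push_cast
    convert this using 1
    ring

lemma exists_rolle_zeros {f : ℝ → ℝ} (hf : ∀ x, DifferentiableAt ℝ f x) {m : ℕ}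
    (u : Fin (m + 1) → ℝ) (hu : StrictMono u) (hz : ∀ i, f (u i) = 0) :
    ∃ v : Fin m → ℝ, StrictMono v ∧
      (∀ i, v i ∈ Set.Ioo (u i.castSucc) (u i.succ)) ∧ ∀ i, deriv f (v i) = 0 := by
  have key : ∀ i : Fin m, ∃ x ∈ Set.Ioo (u i.castSucc) (u i.succ), deriv f x = 0 := by
    intro i
    apply exists_deriv_eq_zero (f := f) (hu (Fin.castSucc_lt_succ (i := i)))
    · exact (Continuous.continuousOn (by
        exact Differentiable.continuous (fun x => hf x)))
    · rw [hz, hz]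
  choose v hv1 hv2 using key
  refine ⟨v, ?_, hv1, hv2⟩
  intro i j hij
  calc v i < u i.succ := (hv1 i).2
    _ ≤ u j.castSucc := by
        have hle : i.succ ≤ j.castSucc := by
          rw [Fin.le_def]
          have := (Fin.lt_def).1 hij
          simp only [Fin.val_succ, Fin.coe_castSucc] at *
          omega
        rcases eq_or_lt_of_le hle with h | h
        · rw [h]
        · exact (hu h).le
    _ < v j := (hv1 j).1

lemma exp_I_injOn : ∀ s ∈ Set.Ioo (0:ℝ) (2*π), ∀ u ∈ Set.Ioo (0:ℝ) (2*π),
    Complex.exp (s * Complex.I) = Complex.exp (u * Complex.I) → s = u := by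
  intro s hs u hu h
  rw [Complex.exp_eq_exp_iff_exists_int] at h
  obtain ⟨n, hn⟩ := h
  have : (s : ℂ) = (u : ℂ) + n * (2 * π) := by
    have h2 : (s : ℂ) * Complex.I = ((u : ℂ) + n * (2 * π)) * Complex.I := by
      rw [hn]; ring
    exact mul_right_cancel₀ Complex.I_ne_zero h2
  have hsu : s = u + n * (2 * π) := by exact_mod_cast this
  have hπ := Real.pi_pos
  have hn0 : n = 0 := by
    rcases lt_trichotomy n 0 with h' | h' | h'
    · have hn1 : n ≤ -1 := by omega
      have : (n : ℝ) ≤ -1 := by exact_mod_cast hn1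
      nlinarith [hs.1, hs.2, hu.1, hu.2]
    · exact h'
    · have : (1 : ℝ) ≤ n := by exact_mod_cast h'
      nlinarith [hs.1, hs.2, hu.1, hu.2]
  simp [hn0] at hsu
  exact hsu

lemma polyTrig_base (k : ℕ) (c a b : ℕ → ℝ) (t : Fin (2 * k + 1) → ℝ)
    (hmono : StrictMono t) (ht : ∀ i, t i ∈ Set.Ioo (0:ℝ) (2 * π))
    (hz : ∀ i, polyTrig 0 k c a b (t i) = 0) :
    c 0 = 0 ∧ ∀ j < k, a j = 0 ∧ b j = 0 := by
  classical
  set z : Fin (2 * k + 1) → ℂ := fun m => Complex.exp (t m * Complex.I) with hzdef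
  set DD : ℕ → ℂ := fun p =>
    if p < k then ((a (k - 1 - p) : ℂ) + Complex.I * (b (k - 1 - p) : ℂ)) / 2
    else if p = k then (c 0 : ℂ)
    else ((a (p - k - 1) : ℂ) - Complex.I * (b (p - k - 1) : ℂ)) / 2 with hDD
  set D : Fin (2 * k + 1) → ℂ := fun p => DD (p : ℕ) with hD
  have key : (Matrix.vandermonde z) *ᵥ D = 0 := by
    funext m
    have hzm : z m ≠ 0 := Complex.exp_ne_zero _
    show (∑ p : Fin (2 * k + 1), Matrix.vandermonde z m p * D p) = 0
    have hsum : (∑ p : Fin (2 * k + 1), Matrix.vandermonde z m p * D p)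
        = ∑ p ∈ range (2 * k + 1), z m ^ p * DD p := by
      rw [← Fin.sum_univ_eq_sum_range (fun p => z m ^ p * DD p) (2 * k + 1)]
      rfl
    rw [hsum]
    set G : ℕ → ℂ := fun p => z m ^ p * DD p with hG
    have hsplit : ∑ p ∈ range (2 * k + 1), G p
        = G k + ∑ j ∈ range k, (G (k - 1 - j) + G (k + 1 + j)) := by
      have e1 : 2 * k + 1 = (k + 1) + k := by ring
      rw [e1, sum_range_add' G (k + 1) k, sum_range_succ, ← sum_range_reflect (fun p => G p) k]
      rw [sum_add_distrib]
      ring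
    rw [hsplit]
    have hGk : G k = z m ^ k * (c 0 : ℂ) := by
      simp [hG, hDD]
    have hpair : ∀ j < k, G (k - 1 - j) + G (k + 1 + j)
        = z m ^ k * ((a j : ℂ) * Real.cos ((j + 1 : ℕ) * t m)
            + (b j : ℂ) * Real.sin ((j + 1 : ℕ) * t m)) := by
      intro j hj
      set θ : ℝ := ((j : ℝ) + 1) * t m with hθ
      have hW : z m ^ (j + 1) = Complex.exp (θ * Complex.I) := by
        rw [hzdef]
        rw [← Complex.exp_nat_mul]
        congr 1
        push_cast [hθ]
        ring
      have hWinv : (Complex.exp (θ * Complex.I))⁻¹ = Complex.exp (-θ * Complex.I) := by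
        rw [← Complex.exp_neg]; ring_nf
      have hlow : z m ^ (k - 1 - j) * z m ^ (j + 1) = z m ^ k := by
        rw [← pow_add]
        congr 1
        omega
      have hlow' : z m ^ (k - 1 - j) = z m ^ k * (Complex.exp (θ * Complex.I))⁻¹ := by
        rw [← hW]
        field_simp
        linear_combination hlow
      have hhigh : z m ^ (k + 1 + j) = z m ^ k * Complex.exp (θ * Complex.I) := by
        rw [← hW, ← pow_add]
        congr 1
        omega
      have hDlow : DD (k - 1 - j) = ((a j : ℂ) + Complex.I * (b j : ℂ)) / 2 := by
        rw [hDD]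
        have h1 : k - 1 - j < k := by omega
        have h2 : k - 1 - (k - 1 - j) = j := by omega
        simp [h1, h2]
      have hDhigh : DD (k + 1 + j) = ((a j : ℂ) - Complex.I * (b j : ℂ)) / 2 := by
        rw [hDD]
        have h1 : ¬ (k + 1 + j < k) := by omega
        have h2 : ¬ (k + 1 + j = k) := by omega
        have h3 : k + 1 + j - k - 1 = j := by omega
        simp [h1, h2, h3]
      have hexp : Complex.exp (θ * Complex.I)
          = (Real.cos θ : ℂ) + (Real.sin θ : ℂ) * Complex.I := by
        rw [Complex.exp_mul_I]
        simp [Complex.ofReal_cos, Complex.ofReal_sin]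
      have hexpneg : Complex.exp (-θ * Complex.I)
          = (Real.cos θ : ℂ) - (Real.sin θ : ℂ) * Complex.I := by
        have : (-θ : ℂ) * Complex.I = (↑(-θ) : ℂ) * Complex.I := by push_cast; ring
        rw [this, Complex.exp_mul_I]
        simp [Complex.ofReal_cos, Complex.ofReal_sin, Complex.cos_neg, Complex.sin_neg]
        ring
      have hcast : ((j + 1 : ℕ) : ℝ) * t m = θ := by push_cast [hθ]; ring
      simp only [hG]
      rw [hDlow, hDhigh, hlow', hhigh, hWinv, hexp, hexpneg, hcast]
      linear_combination (-(z m ^ k) * ((Real.sin θ : ℂ)) * ((b j : ℂ))) * Complex.I_sq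
    have hfinal : ∑ j ∈ range k, (G (k - 1 - j) + G (k + 1 + j))
        = z m ^ k * ∑ j ∈ range k, ((a j : ℂ) * Real.cos ((j + 1 : ℕ) * t m)
            + (b j : ℂ) * Real.sin ((j + 1 : ℕ) * t m)) := by
      rw [mul_sum]
      exact Finset.sum_congr rfl fun j hj => hpair j (mem_range.1 hj)
    rw [hGk, hfinal, ← mul_add]
    have hzero : ((c 0 : ℂ) + ∑ j ∈ range k, ((a j : ℂ) * Real.cos ((j + 1 : ℕ) * t m)
        + (b j : ℂ) * Real.sin ((j + 1 : ℕ) * t m))) = ((polyTrig 0 k c a b (t m) : ℝ) : ℂ) := by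
      rw [polyTrig]
      push_cast
      simp
    rw [hzero, hz m]
    simp
  -- Vandermonde determinant is nonzero
  have hdet : (Matrix.vandermonde z).det ≠ 0 := by
    rw [Matrix.det_vandermonde]
    apply Finset.prod_ne_zero_iff.2
    intro i _
    apply Finset.prod_ne_zero_iff.2
    intro j hj
    have hij : i < j := Finset.mem_Ioi.1 hj
    have : z i ≠ z j := by
      intro h
      exact absurd (exp_I_injOn _ (ht i) _ (ht j) h) (hmono hij).ne
    exact sub_ne_zero.2 this.symm
  have hDzero : D = 0 := by
    by_contra hne
    exact hdet (Matrix.exists_mulVec_eq_zero_iff.1 ⟨D, hne, key⟩)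
  -- extract coefficients
  have hDD0 : ∀ p : ℕ, p < 2 * k + 1 → DD p = 0 := by
    intro p hp
    have := congrFun hDzero ⟨p, hp⟩
    simpa [hD] using this
  constructor
  · have := hDD0 k (by omega)
    rw [hDD] at this
    simp at this
    exact_mod_cast this
  · intro j hj
    have hlow := hDD0 (k - 1 - j) (by omega)
    have hhigh := hDD0 (k + 1 + j) (by omega)
    rw [hDD] at hlow hhigh
    have h1 : k - 1 - j < k := by omega
    have h2 : k - 1 - (k - 1 - j) = j := by omega
    have h3 : ¬ (k + 1 + j < k) := by omega
    have h4 : ¬ (k + 1 + j = k) := by omega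
    have h5 : k + 1 + j - k - 1 = j := by omega
    simp only [h1, h2, h3, h4, h5, if_true, if_false] at hlow hhigh
    have ha : (a j : ℂ) = 0 := by linear_combination hlow + hhigh
    have hbI : Complex.I * (b j : ℂ) = 0 := by linear_combination hlow - hhigh
    have hb : (b j : ℂ) = 0 := by
      rcases mul_eq_zero.1 hbI with h | h
      · exact absurd h Complex.I_ne_zero
      · exact h
    exact ⟨by exact_mod_cast ha, by exact_mod_cast hb⟩

lemma polyTrig_differentiable (d k : ℕ) (c a b : ℕ → ℝ) :
    ∀ x, DifferentiableAt ℝ (polyTrig (d + 1) k c a b) x := by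
  intro x
  exact (polyTrig_hasDerivAt d k c a b x).differentiableAt

lemma polyTrig_zero (d k : ℕ) (c a b : ℕ → ℝ)
    (t : Fin (d + 2 * k + 1) → ℝ) (hmono : StrictMono t)
    (ht : ∀ i, t i ∈ Set.Ioo (0:ℝ) (2 * π))
    (hz : ∀ i, polyTrig d k c a b (t i) = 0) :
    (∀ i < d + 1, c i = 0) ∧ ∀ j < k, a j = 0 ∧ b j = 0 := by
  induction d generalizing c a b with
  | zero =>
      have h0 : (0 : ℕ) + 2 * k + 1 = 2 * k + 1 := by omega
      obtain ⟨hc, hab⟩ := polyTrig_base k c a b (fun i => t (Fin.cast h0.symm i))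
        (fun i j hij => hmono ((Fin.cast_lt_cast h0.symm).2 hij))
        (fun i => ht _) (fun i => hz _)
      exact ⟨fun i hi => by interval_cases i; exact hc, hab⟩
  | succ d ih =>
      -- Rolle
      set f := polyTrig (d + 1) k c a b with hf
      have hder : ∀ x, deriv f x = polyTrig d k (fun i => (i + 1 : ℕ) * c (i + 1))
          (fun j => ((j + 1 : ℕ)) * b j) (fun j => -(((j + 1 : ℕ)) * a j)) x :=
        fun x => (polyTrig_hasDerivAt d k c a b x).deriv
      have hcast : d + 1 + 2 * k + 1 = (d + 2 * k + 1) + 1 := by omega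
      set u : Fin ((d + 2 * k + 1) + 1) → ℝ := fun i => t (Fin.cast hcast.symm i) with hu
      have humono : StrictMono u := fun i j hij => hmono ((Fin.cast_lt_cast hcast.symm).2 hij)
      obtain ⟨v, hvmono, hvmem, hvz⟩ := exists_rolle_zeros
        (polyTrig_differentiable d k c a b) u humono (fun i => hz _)
      have hvz' : ∀ i, polyTrig d k (fun i => (i + 1 : ℕ) * c (i + 1))
          (fun j => ((j + 1 : ℕ)) * b j) (fun j => -(((j + 1 : ℕ)) * a j)) (v i) = 0 :=
        fun i => by rw [← hder]; exact hvz i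
      have hvmem' : ∀ i, v i ∈ Set.Ioo (0:ℝ) (2 * π) := by
        intro i
        have h1 := hvmem i
        have h2 := ht (Fin.cast hcast.symm i.castSucc)
        have h3 := ht (Fin.cast hcast.symm i.succ)
        exact ⟨lt_trans h2.1 h1.1, lt_trans h1.2 h3.2⟩
      obtain ⟨hC, hAB⟩ := ih (fun i => (i + 1 : ℕ) * c (i + 1))
        (fun j => ((j + 1 : ℕ)) * b j) (fun j => -(((j + 1 : ℕ)) * a j)) v hvmono hvmem' hvz'
      have hcsucc : ∀ i < d + 1, c (i + 1) = 0 := by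
        intro i hi
        have h := hC i hi
        have hne : (((i + 1 : ℕ)) : ℝ) ≠ 0 := by positivity
        exact (mul_eq_zero.1 h).resolve_left hne
      have hab' : ∀ j < k, a j = 0 ∧ b j = 0 := by
        intro j hj
        obtain ⟨h1, h2⟩ := hAB j hj
        constructor
        · have : ((j : ℝ) + 1) * a j = 0 := by push_cast at h2 ⊢; linarith
          rcases mul_eq_zero.1 this with h | h
          · exact absurd h (by positivity)
          · exact h
        · have : ((j : ℝ) + 1) * b j = 0 := by push_cast at h1 ⊢; linarith
          rcases mul_eq_zero.1 this with h | h
          · exact absurd h (by positivity)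
          · exact h
      -- now c 0 = 0 from f (t 0) = 0
      have hzero0 : c 0 = 0 := by
        have h0 := hz 0
        rw [hf] at h0
        unfold polyTrig at h0
        have hpoly : ∑ i ∈ range (d + 1 + 1), c i * (t 0) ^ i = c 0 := by
          rw [Finset.sum_range_succ']
          simp only [pow_zero, mul_one]
          have : ∑ i ∈ range (d + 1), c (i + 1) * (t 0) ^ (i + 1) = 0 :=
            Finset.sum_eq_zero fun i hi => by
              rw [hcsucc i (mem_range.1 hi)]; ring
          rw [this]; ring
        have htrig : ∑ j ∈ range k, (a j * Real.cos ((j + 1 : ℕ) * t 0)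
            + b j * Real.sin ((j + 1 : ℕ) * t 0)) = 0 :=
          Finset.sum_eq_zero fun j hj => by
            rw [(hab' j (mem_range.1 hj)).1, (hab' j (mem_range.1 hj)).2]; ring
        rw [hpoly, htrig] at h0
        linarith
      refine ⟨fun i hi => ?_, hab'⟩
      rcases Nat.eq_zero_or_pos i with h | h
      · rw [h]; exact hzero0
      · obtain ⟨i', rfl⟩ := Nat.exists_eq_succ_of_ne_zero h.ne'
        exact hcsucc i' (by omega)

lemma moment_row (d k : ℕ) (x : ℝ) (c : Fin (d + 2 * k + 1) → ℝ) :
    c 0 + ∑ j : Fin (d + 2 * k), mixedMoment d k x j * c j.succ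
      = polyTrig d k (fun i => if h : i < d + 1 then c ⟨i, by omega⟩ else 0)
          (fun j => if h : j < k then c ⟨d + 2 * j + 1, by omega⟩ else 0)
          (fun j => if h : j < k then c ⟨d + 2 * j + 2, by omega⟩ else 0) x := by
  classical
  set cc : ℕ → ℝ := fun m => if h : m < d + 2 * k + 1 then c ⟨m, h⟩ else 0 with hcc
  set F : ℕ → ℝ := fun m =>
    (if m < d then x ^ (m + 1)
     else if (m - d) % 2 = 0 then Real.cos (((m - d) / 2 + 1 : ℕ) * x)
     else Real.sin (((m - d) / 2 + 1 : ℕ) * x)) * cc (m + 1) with hF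
  have hterm : ∀ j : Fin (d + 2 * k), mixedMoment d k x j * c j.succ = F (j : ℕ) := by
    intro j
    have h1 : cc ((j : ℕ) + 1) = c j.succ := by
      have hlt : (j : ℕ) + 1 < d + 2 * k + 1 := by omega
      simp only [hcc]
      rw [dif_pos hlt]
      exact congrArg c (Fin.ext rfl)
    simp only [hF]
    rw [h1]
    rfl
  have hsum : ∑ j : Fin (d + 2 * k), mixedMoment d k x j * c j.succ
      = ∑ m ∈ range (d + 2 * k), F m := by
    rw [← Fin.sum_univ_eq_sum_range F (d + 2 * k)]
    exact Finset.sum_congr rfl fun j _ => hterm j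
  rw [hsum, sum_range_add' F d (2 * k), sum_range_two_mul' k (fun i => F (d + i))]
  unfold polyTrig
  have hc0 : c 0 = (fun i => if h : i < d + 1 then c ⟨i, by omega⟩ else 0) 0 * x ^ 0 := by
    simp
  have hpoly : ∑ i ∈ range (d + 1), (if h : i < d + 1 then c ⟨i, by omega⟩ else 0) * x ^ i
      = (if h : (0:ℕ) < d + 1 then c ⟨0, by omega⟩ else 0) * x ^ 0
        + ∑ m ∈ range d, F m := by
    rw [Finset.sum_range_succ']
    have : ∀ m ∈ range d, (if h : m + 1 < d + 1 then c ⟨m + 1, by omega⟩ else 0) * x ^ (m + 1)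
        = F m := by
      intro m hm
      have hmd : m < d := mem_range.1 hm
      simp only [hF, hcc]
      rw [dif_pos (by omega : m + 1 < d + 1), if_pos hmd, dif_pos (by omega : m + 1 < d + 2 * k + 1)]
      ring
    rw [Finset.sum_congr rfl this]
    ring
  have htrig : ∀ j ∈ range k,
      ((if h : j < k then c ⟨d + 2 * j + 1, by omega⟩ else 0) * Real.cos ((j + 1 : ℕ) * x)
        + (if h : j < k then c ⟨d + 2 * j + 2, by omega⟩ else 0) * Real.sin ((j + 1 : ℕ) * x))
      = F (d + 2 * j) + F (d + 2 * j + 1) := by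
    intro j hj
    have hjk : j < k := mem_range.1 hj
    simp only [hF, hcc]
    rw [dif_pos hjk, dif_pos hjk]
    have e1 : ¬ (d + 2 * j < d) := by omega
    have e2 : (d + 2 * j - d) = 2 * j := by omega
    have e3 : ¬ (d + 2 * j + 1 < d) := by omega
    have e4 : (d + 2 * j + 1 - d) = 2 * j + 1 := by omega
    rw [if_neg e1, e2, if_neg e3, e4]
    have e5 : (2 * j) % 2 = 0 := by omega
    have e6 : ¬ ((2 * j + 1) % 2 = 0) := by omega
    rw [if_pos e5, if_neg e6]
    have e7 : (2 * j) / 2 + 1 = j + 1 := by omega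
    have e8 : (2 * j + 1) / 2 + 1 = j + 1 := by omega
    rw [e7, e8]
    have e9 : d + 2 * j + 1 < d + 2 * k + 1 := by omega
    have e10 : d + 2 * j + 1 + 1 < d + 2 * k + 1 := by omega
    rw [dif_pos e9, dif_pos e10]
    have e11 : (⟨d + 2 * j + 1 + 1, e10⟩ : Fin (d + 2 * k + 1)) = ⟨d + 2 * j + 2, by omega⟩ := by
      ext; simp
    rw [e11]
    ring
  have h00 : (if h : (0:ℕ) < d + 1 then c ⟨0, by omega⟩ else 0) = c 0 := by
    rw [dif_pos (by omega)]
    rfl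
  rw [Finset.sum_congr rfl htrig, hpoly, h00]
  have hidx : ∑ j ∈ range k, (F (d + 2 * j) + F (d + 2 * j + 1))
      = ∑ j ∈ range k, (F (d + 2 * j) + F (d + (2 * j + 1))) := by
    apply Finset.sum_congr rfl
    intro j _
    rw [show d + 2 * j + 1 = d + (2 * j + 1) from by omega]
  rw [hidx]
  ring

/-- Any `d + 2k + 1` points on the mixed moment curve with distinct parameters in
`(0, 2π)` are affinely independent. -/
theorem stmt_16 (d k : ℕ) (hdk : 2 ≤ d + 2 * k)
    (t : Fin (d + 2 * k + 1) → ℝ) (hmono : StrictMono t)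
    (ht : ∀ i, t i ∈ Set.Ioo (0 : ℝ) (2 * π)) :
    AffineIndependent ℝ (fun i => mixedMoment d k (t i)) := by
  classical
  set M : Matrix (Fin (d + 2 * k + 1)) (Fin (d + 2 * k + 1)) ℝ :=
    Matrix.of fun i j =>
      Fin.cases (motive := fun _ => ℝ) 1 (fun j' => mixedMoment d k (t i) j') j with hM
  have hMrow : ∀ i (c : Fin (d + 2 * k + 1) → ℝ),
      (M *ᵥ c) i = c 0 + ∑ j : Fin (d + 2 * k), mixedMoment d k (t i) j * c j.succ := by
    intro i c
    show ∑ j, M i j * c j = _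
    rw [Fin.sum_univ_succ]
    simp [hM, Matrix.of_apply]
  have hcol : ∀ c : Fin (d + 2 * k + 1) → ℝ, M *ᵥ c = 0 → c = 0 := by
    intro c hc
    have hrow : ∀ i, polyTrig d k
        (fun i => if h : i < d + 1 then c ⟨i, by omega⟩ else 0)
        (fun j => if h : j < k then c ⟨d + 2 * j + 1, by omega⟩ else 0)
        (fun j => if h : j < k then c ⟨d + 2 * j + 2, by omega⟩ else 0) (t i) = 0 := by
      intro i
      rw [← moment_row d k (t i) c, ← hMrow i c, hc]
      rfl
    obtain ⟨hC, hAB⟩ := polyTrig_zero d k _ _ _ t hmono ht hrow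
    funext j
    show c j = 0
    rcases Nat.lt_or_ge (j : ℕ) (d + 1) with h | h
    · have := hC (j : ℕ) h
      rw [dif_pos h] at this
      rwa [show (⟨(j : ℕ), by omega⟩ : Fin (d + 2 * k + 1)) = j from Fin.ext rfl] at this
    · have hjlt : (j : ℕ) < d + 2 * k + 1 := j.isLt
      rcases Nat.even_or_odd ((j : ℕ) - d - 1) with ⟨m, hm⟩ | ⟨m, hm⟩
      · -- j = d + 2m + 1
        have hmk : m < k := by omega
        have hje : (j : ℕ) = d + 2 * m + 1 := by omega
        have := (hAB m hmk).1
        rw [dif_pos hmk] at this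
        rwa [show (⟨d + 2 * m + 1, by omega⟩ : Fin (d + 2 * k + 1)) = j from Fin.ext (by simp only [Fin.val_mk]; omega)]
          at this
      · have hmk : m < k := by omega
        have hje : (j : ℕ) = d + 2 * m + 2 := by omega
        have := (hAB m hmk).2
        rw [dif_pos hmk] at this
        rwa [show (⟨d + 2 * m + 2, by omega⟩ : Fin (d + 2 * k + 1)) = j from Fin.ext (by simp only [Fin.val_mk]; omega)]
          at this
  have hdet : M.det ≠ 0 := by
    intro h
    obtain ⟨v, hv, hv0⟩ := Matrix.exists_mulVec_eq_zero_iff.2 h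
    exact hv (hcol v hv0)
  rw [affineIndependent_iff]
  intro s w hw hwv
  set w' : Fin (d + 2 * k + 1) → ℝ := fun i => if i ∈ s then w i else 0 with hw'
  have hker : w' ᵥ* M = 0 := by
    funext j
    show ∑ i, w' i * M i j = 0
    refine Fin.cases ?_ ?_ j
    · have : ∀ i, w' i * M i 0 = w' i := by
        intro i
        simp [hM, Matrix.of_apply]
      rw [Finset.sum_congr rfl fun i _ => this i]
      rw [← Finset.sum_subset (Finset.subset_univ s) (by
        intro x _ hx
        simp [hw', hx])]
      rw [← hw]
      exact Finset.sum_congr rfl fun i hi => by simp [hw', hi]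
    · intro j'
      have hterm : ∀ i, w' i * M i j'.succ = w' i * mixedMoment d k (t i) j' := by
        intro i
        simp [hM, Matrix.of_apply]
      rw [Finset.sum_congr rfl fun i _ => hterm i]
      have h1 : ∑ i, w' i * mixedMoment d k (t i) j'
          = ∑ i ∈ s, w i * mixedMoment d k (t i) j' := by
        rw [← Finset.sum_subset (Finset.subset_univ s) (by
          intro x _ hx
          simp [hw', hx])]
        exact Finset.sum_congr rfl fun i hi => by simp [hw', hi]
      rw [h1]
      have h2 := congrArg (EuclideanSpace.proj (𝕜 := ℝ) j') hwv
      rw [map_sum, map_zero] at h2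
      simpa [EuclideanSpace.proj] using h2
  have hz : w' = 0 := by
    by_contra hne
    exact hdet (Matrix.exists_vecMul_eq_zero_iff.1 ⟨w', hne, hker⟩)
  intro i hi
  have := congrFun hz i
  simpa [hw', hi] using this
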